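/- arXiv:2201.01581 — 3 statements merged into one kernel-verified Lean document; each statement's English description precedes it below -/
import Mathlib

section
/- Let γ, k, τ > 0. With the 2×2 real matrices A, C, V defined from γ, k, τ as in the context, the stationary variance equation V = A V Aᵀ + C holds. -/
/-!
With `e = exp (-γτ)` one has `φ(γτ) = (1 - e)/(γτ)` and, since `exp (-2γτ) = e²`,
`φ(2γτ) = (1 - e²)/(2γτ)`. After these substitutions each entry of `V = A V Aᵀ + C` is a
rational identity in `γ, τ, k, e` that holds for every `e`; for instance the `(1,2)` entry reads
`k(1 - e) = k(1 - e)e + k(1 - e)²`.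
-/

open Real

/-- `φ(x) = (1 - exp(-x))/x`. -/
noncomputable def phi (x : ℝ) : ℝ := (1 - Real.exp (-x)) / x

theorem phi_two_mul (x : ℝ) : phi (2 * x) = (1 - exp (-x) ^ 2) / (2 * x) := by
  rw [phi, ← exp_nat_mul]
  ring_nf

theorem langevin_stationary_variance_eq_of_decay {γ τ : ℝ} (hγ : γ ≠ 0) (hτ : τ ≠ 0)
    (k e p q : ℝ) (hp : p = (1 - e) / (γ * τ)) (hq : q = (1 - e ^ 2) / (2 * γ * τ)) :
    !![2 * k * τ * (1 - p), k * γ * τ * p; k * γ * τ * p, k * γ] =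
      !![0, τ * p; 0, e] * !![2 * k * τ * (1 - p), k * γ * τ * p; k * γ * τ * p, k * γ] *
          (!![0, τ * p; 0, e] : Matrix (Fin 2) (Fin 2) ℝ).transpose +
        !![2 * k * τ * (1 - 2 * p + q), k * (γ * τ * p) ^ 2;
           k * (γ * τ * p) ^ 2, 2 * k * γ ^ 2 * τ * q] := by
  subst hp hq
  rw [Matrix.eta_fin_two (Matrix.transpose _), Matrix.mul_fin_two, Matrix.mul_fin_two]
  ext i j
  fin_cases i <;> fin_cases j <;>
    · simp only [Fin.zero_eta, Fin.mk_one, Fin.isValue, Matrix.add_apply, Matrix.of_apply,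
        Matrix.transpose_apply, Matrix.cons_val', Matrix.cons_val_zero, Matrix.cons_val_one,
        Matrix.cons_val_fin_one, zero_mul, zero_add, mul_zero]
      field_simp
      ring

theorem langevin_stationary_variance_eq_general (γ k τ : ℝ) (hγ : 0 < γ) (hτ : 0 < τ) :
    let A : Matrix (Fin 2) (Fin 2) ℝ := !![0, τ * phi (γ * τ); 0, Real.exp (-(γ * τ))]
    let C : Matrix (Fin 2) (Fin 2) ℝ :=
      !![2 * k * τ * (1 - 2 * phi (γ * τ) + phi (2 * γ * τ)), k * (γ * τ * phi (γ * τ)) ^ 2;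
         k * (γ * τ * phi (γ * τ)) ^ 2, 2 * k * γ ^ 2 * τ * phi (2 * γ * τ)]
    let V : Matrix (Fin 2) (Fin 2) ℝ :=
      !![2 * k * τ * (1 - phi (γ * τ)), k * γ * τ * phi (γ * τ);
         k * γ * τ * phi (γ * τ), k * γ]
    V = A * V * A.transpose + C :=
  langevin_stationary_variance_eq_of_decay hγ.ne' hτ.ne' k _ _ _ rfl
    (by rw [mul_assoc, phi_two_mul, ← mul_assoc])

/-- The stationary variance equation `V = A V Aᵀ + C` for the discretised Langevin model. -/
theorem langevin_stationary_variance_eq (γ k τ : ℝ) (hγ : 0 < γ) (hk : 0 < k) (hτ : 0 < τ) :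
    let A : Matrix (Fin 2) (Fin 2) ℝ := !![0, τ * phi (γ * τ); 0, Real.exp (-(γ * τ))]
    let C : Matrix (Fin 2) (Fin 2) ℝ :=
      !![2 * k * τ * (1 - 2 * phi (γ * τ) + phi (2 * γ * τ)), k * (γ * τ * phi (γ * τ)) ^ 2;
         k * (γ * τ * phi (γ * τ)) ^ 2, 2 * k * γ ^ 2 * τ * phi (2 * γ * τ)]
    let V : Matrix (Fin 2) (Fin 2) ℝ :=
      !![2 * k * τ * (1 - phi (γ * τ)), k * γ * τ * phi (γ * τ);
         k * γ * τ * phi (γ * τ), k * γ]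
    V = A * V * A.transpose + C :=
  langevin_stationary_variance_eq_general γ k τ hγ hτ
end

section
/- Let γ, k, τ > 0, and let A and V be the 2×2 real matrices defined in the context. Then for every integer m ≥ 1, the matrix G(m) := Aᵐ · V has rows (kγτ²φ(γτ)²·exp(-(m-1)γτ), kγτφ(γτ)·exp(-(m-1)γτ)) and (kγτφ(γτ)·exp(-mγτ), kγ·exp(-mγτ)). In particular the (1,1) entry is G₁₁(m) = kγτ²φ(γτ)²·exp(-(m-1)γτ). -/
open Real

/-- The autocovariance matrices `G(m) = Aᵐ·V` of the discretised Langevin model: for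
`m ≥ 1`, `G(m)` has rows `(kγτ²φ(γτ)²e^{-(m-1)γτ}, kγτφ(γτ)e^{-(m-1)γτ})` and
`(kγτφ(γτ)e^{-mγτ}, kγe^{-mγτ})`; in particular
`G₁₁(m) = kγτ²φ(γτ)²e^{-(m-1)γτ}`. -/
theorem langevin_autocovariance_matrix (γ k τ : ℝ) (hγ : 0 < γ) (hk : 0 < k) (hτ : 0 < τ) :
    ∀ m : ℕ, 1 ≤ m →
      (!![0, τ * phi (γ * τ); 0, Real.exp (-(γ * τ))] : Matrix (Fin 2) (Fin 2) ℝ) ^ m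
          * !![2 * k * τ * (1 - phi (γ * τ)), k * γ * τ * phi (γ * τ);
               k * γ * τ * phi (γ * τ), k * γ]
        = !![k * γ * τ ^ 2 * phi (γ * τ) ^ 2 * Real.exp (-(((m : ℝ) - 1) * γ * τ)),
             k * γ * τ * phi (γ * τ) * Real.exp (-(((m : ℝ) - 1) * γ * τ));
             k * γ * τ * phi (γ * τ) * Real.exp (-((m : ℝ) * γ * τ)),
             k * γ * Real.exp (-((m : ℝ) * γ * τ))] := by
  intro m hm
  induction m, hm using Nat.le_induction with
  | base =>
    simp only [pow_one, Matrix.mul_fin_two]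
    norm_num
    ring_nf
    exact ⟨⟨trivial, trivial⟩, trivial, trivial⟩
  | succ n hn ih =>
    rw [pow_succ', Matrix.mul_assoc, ih, Matrix.mul_fin_two]
    push_cast
    have h1 : -(((n : ℝ) + 1 - 1) * γ * τ) = -((n : ℝ) * γ * τ) := by ring
    have h2 : -(((n : ℝ) + 1) * γ * τ) = -(γ * τ) + -((n : ℝ) * γ * τ) := by ring
    rw [h1, h2, Real.exp_add]
    congr 1 <;> ring
end

section
/- (Toeplitz autocovariance of discretised Langevin displacements.) Consider the discrete Langevin process of the context with parameters γ, k, τ > 0. Then for all n ≥ 0 the displacement autocovariances are Cov(ΔX_n, ΔX_{n+m}) = 2kτ(1 - φ(γτ)) when m = 0, and Cov(ΔX_n, ΔX_{n+m}) = kγτ²φ(γτ)²·exp(-(m-1)γτ) when m ≥ 1. -/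
open MeasureTheory ProbabilityTheory

/-- The discrete Langevin process with parameters `γ, k, τ`: an initial velocity
`U₀ ~ N(0, kγ)`, together with an i.i.d. sequence `(ε_n)` of 2-dimensional Gaussian
random vectors `ε_n = (ε_n¹, ε_n²)` with mean zero and covariance matrix `C` given by
`C₁₁ = 2kτ(1 - 2φ(γτ) + φ(2γτ))`, `C₁₂ = C₂₁ = k(γτφ(γτ))²`, `C₂₂ = 2kγ²τφ(2γτ)`
(specified via the laws of all linear functionals), the whole sequence being
independent of `U₀`. -/
structure DiscreteLangevin {Ω : Type*} [MeasurableSpace Ω] (P : Measure Ω)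
    (γ k τ : ℝ) where
  U0 : Ω → ℝ
  ε : ℕ → Ω → ℝ × ℝ
  meas_U0 : Measurable U0
  meas_ε : ∀ n, Measurable (ε n)
  law_U0 : P.map U0 = gaussianReal 0 (k * γ).toNNReal
  law_ε : ∀ (n : ℕ) (a b : ℝ),
    P.map (fun ω => a * (ε n ω).1 + b * (ε n ω).2)
      = gaussianReal 0 (a ^ 2 * (2 * k * τ * (1 - 2 * phi (γ * τ) + phi (2 * γ * τ)))
          + 2 * a * b * (k * (γ * τ * phi (γ * τ)) ^ 2)
          + b ^ 2 * (2 * k * γ ^ 2 * τ * phi (2 * γ * τ))).toNNReal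
  indep_ε : iIndepFun ε P
  indep_U0 : IndepFun U0 (fun ω => fun n => ε n ω) P

/-- The velocities of the discrete Langevin process:
`U_{n+1} = exp(-γτ)·U_n + ε_n²`. -/
noncomputable def DiscreteLangevin.U {Ω : Type*} [MeasurableSpace Ω] {P : Measure Ω}
    {γ k τ : ℝ} (L : DiscreteLangevin P γ k τ) : ℕ → Ω → ℝ
  | 0 => L.U0
  | n + 1 => fun ω => Real.exp (-(γ * τ)) * L.U n ω + (L.ε n ω).2

/-- The displacements of the discrete Langevin process:
`ΔX_n = τφ(γτ)·U_n + ε_n¹`. -/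
noncomputable def DiscreteLangevin.ΔX {Ω : Type*} [MeasurableSpace Ω] {P : Measure Ω}
    {γ k τ : ℝ} (L : DiscreteLangevin P γ k τ) (n : ℕ) : Ω → ℝ :=
  fun ω => τ * phi (γ * τ) * L.U n ω + (L.ε n ω).1

/-- The covariance `Cov(X, Y) = E[(X - E X)(Y - E Y)]` of two real random variables. -/
noncomputable def cov {Ω : Type*} [MeasurableSpace Ω] (P : Measure Ω) (X Y : Ω → ℝ) : ℝ :=
  ∫ ω, (X ω - ∫ x, X x ∂P) * (Y ω - ∫ x, Y x ∂P) ∂P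

/-!
The velocity is a stationary AR(1) sequence driven by the second noise coordinate: `U_n` is a
function of `U₀, ε₀, …, ε_{n-1}`, so it is uncorrelated with `ε_m` for `m ≥ n`, and
`Var U_n = kγ` for all `n` because `e^{-2γτ} kγ + C₂₂ = kγ`. Hence
`Cov(ΔX_n, U_{n+j+1}) = e^{-jγτ} Cov(ΔX_n, U_{n+1}) = e^{-jγτ} kγτφ(γτ)`, and pairing with
`ΔX_{n+j+1} = τφ(γτ) U_{n+j+1} + ε¹_{n+j+1}` gives the off-diagonal autocovariances. Every identity
between the constants reduces to `x φ(x) = 1 - e^{-x}`.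
-/
lemma mul_phi (x : ℝ) : x * phi x = 1 - Real.exp (-x) := by
  rcases eq_or_ne x 0 with rfl | hx
  · simp
  · exact mul_div_cancel₀ _ hx

lemma phi_nonneg (x : ℝ) : 0 ≤ phi x := by
  rcases lt_trichotomy x 0 with hx | rfl | hx
  · exact div_nonneg_of_nonpos (by linarith [Real.one_lt_exp_iff.2 (neg_pos.2 hx)]) hx.le
  · simp [phi]
  · exact div_nonneg (by linarith [Real.exp_lt_one_iff.2 (neg_neg_of_pos hx)]) hx.le

lemma monotone_two_mul_sub_three_add_four_mul_exp_neg_sub_exp_neg_two_mul :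
    Monotone fun x : ℝ => 2 * x - 3 + 4 * Real.exp (-x) - Real.exp (-(2 * x)) := by
  refine monotone_of_deriv_nonneg (by fun_prop) fun x => ?_
  have hderiv : HasDerivAt (fun x : ℝ => 2 * x - 3 + 4 * Real.exp (-x) - Real.exp (-(2 * x)))
      (2 * (1 - Real.exp (-x)) ^ 2) x := by
    have hexp : ∀ c : ℝ,
        HasDerivAt (fun x : ℝ => Real.exp (-(c * x))) (-c * Real.exp (-(c * x))) x := fun c => by
      simpa [mul_comm] using ((hasDerivAt_id x).const_mul c).neg.exp
    have := ((((hasDerivAt_id x).const_mul 2).sub_const 3).add ((hexp 1).const_mul 4)).sub (hexp 2)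
    simp only [one_mul, id, mul_one] at this
    refine this.congr_deriv ?_
    rw [show -(2 * x) = -x + -x by ring, Real.exp_add]
    ring
  rw [hderiv.deriv]
  positivity

lemma one_sub_two_mul_phi_add_phi_two_mul_nonneg {x : ℝ} (hx : 0 < x) :
    0 ≤ 1 - 2 * phi x + phi (2 * x) := by
  have key : 2 * x * (1 - 2 * phi x + phi (2 * x))
      = 2 * x - 3 + 4 * Real.exp (-x) - Real.exp (-(2 * x)) := by
    linear_combination (-4) * mul_phi x + mul_phi (2 * x)
  have := monotone_two_mul_sub_three_add_four_mul_exp_neg_sub_exp_neg_two_mul hx.le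
  simp only [mul_zero, neg_zero, Real.exp_zero] at this
  exact nonneg_of_mul_nonneg_right (by rw [key]; linarith) (by positivity)

lemma exp_neg_sq_add_two_mul_mul_phi_two_mul (x : ℝ) :
    Real.exp (-x) ^ 2 + 2 * x * phi (2 * x) = 1 := by
  rw [mul_phi, ← Real.exp_nat_mul]
  push_cast
  ring_nf

lemma mul_phi_sq_add_two_mul_phi_two_mul (x : ℝ) :
    x * phi x ^ 2 + 2 * phi (2 * x) = 2 * phi x := by
  rcases eq_or_ne x 0 with rfl | hx
  · simp [phi]
  · apply mul_left_cancel₀ hx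
    linear_combination (x * phi x - 1 - Real.exp (-x)) * mul_phi x
      + exp_neg_sq_add_two_mul_mul_phi_two_mul x

lemma cov_eq_covariance {Ω : Type*} [MeasurableSpace Ω] (P : Measure Ω) (X Y : Ω → ℝ) :
    cov P X Y = cov[X, Y; P] := rfl

section Covariance

variable {Ω : Type*} [MeasurableSpace Ω] {μ : Measure Ω} [IsFiniteMeasure μ] {X Y Z W : Ω → ℝ}

lemma covariance_smul_add_smul_add (hX : MemLp X 2 μ) (hY : MemLp Y 2 μ) (hZ : MemLp Z 2 μ)
    (hW : MemLp W 2 μ) (a b : ℝ) :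
    cov[a • X + Y, b • Z + W; μ]
      = a * b * cov[X, Z; μ] + a * cov[X, W; μ] + b * cov[Y, Z; μ] + cov[Y, W; μ] := by
  rw [covariance_add_left (hX.const_smul a) hY ((hZ.const_smul b).add hW),
    covariance_add_right (hX.const_smul a) (hZ.const_smul b) hW,
    covariance_add_right hY (hZ.const_smul b) hW]
  simp only [covariance_smul_left, covariance_smul_right]
  ring

end Covariance

namespace DiscreteLangevin

variable {Ω : Type*} [MeasurableSpace Ω] {P : Measure Ω} {γ k τ : ℝ}
  (L : DiscreteLangevin P γ k τ)

lemma hasLaw_noise (n : ℕ) (a b : ℝ) :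
    HasLaw (fun ω => a * (L.ε n ω).1 + b * (L.ε n ω).2)
      (gaussianReal 0 (a ^ 2 * (2 * k * τ * (1 - 2 * phi (γ * τ) + phi (2 * γ * τ)))
          + 2 * a * b * (k * (γ * τ * phi (γ * τ)) ^ 2)
          + b ^ 2 * (2 * k * γ ^ 2 * τ * phi (2 * γ * τ))).toNNReal) P where
  aemeasurable := by have := L.meas_ε n; fun_prop
  map_eq := L.law_ε n a b

lemma memLp_noise (n : ℕ) (a b : ℝ) :
    MemLp (fun ω => a * (L.ε n ω).1 + b * (L.ε n ω).2) 2 P :=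
  (L.hasLaw_noise n a b).hasGaussianLaw.memLp_two

lemma memLp_noise_fst (n : ℕ) : MemLp (fun ω => (L.ε n ω).1) 2 P := by
  simpa using L.memLp_noise n 1 0

lemma memLp_noise_snd (n : ℕ) : MemLp (fun ω => (L.ε n ω).2) 2 P := by
  simpa using L.memLp_noise n 0 1

lemma variance_noise (n : ℕ) (a b : ℝ)
    (hq : 0 ≤ a ^ 2 * (2 * k * τ * (1 - 2 * phi (γ * τ) + phi (2 * γ * τ)))
          + 2 * a * b * (k * (γ * τ * phi (γ * τ)) ^ 2)
          + b ^ 2 * (2 * k * γ ^ 2 * τ * phi (2 * γ * τ))) :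
    Var[fun ω => a * (L.ε n ω).1 + b * (L.ε n ω).2; P]
      = a ^ 2 * (2 * k * τ * (1 - 2 * phi (γ * τ) + phi (2 * γ * τ)))
          + 2 * a * b * (k * (γ * τ * phi (γ * τ)) ^ 2)
          + b ^ 2 * (2 * k * γ ^ 2 * τ * phi (2 * γ * τ)) := by
  rw [(L.hasLaw_noise n a b).variance_eq, variance_id_gaussianReal, Real.coe_toNNReal _ hq]

lemma variance_noise_fst (hγ : 0 < γ) (hk : 0 ≤ k) (hτ : 0 < τ) (n : ℕ) :
    Var[fun ω => (L.ε n ω).1; P] = 2 * k * τ * (1 - 2 * phi (γ * τ) + phi (2 * γ * τ)) := by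
  have hA : 0 ≤ 2 * k * τ * (1 - 2 * phi (γ * τ) + phi (2 * γ * τ)) := by
    rw [mul_assoc 2 γ]
    exact mul_nonneg (by positivity) (one_sub_two_mul_phi_add_phi_two_mul_nonneg (mul_pos hγ hτ))
  simpa using L.variance_noise n 1 0 (by simpa using hA)

lemma variance_noise_snd (hk : 0 ≤ k) (hτ : 0 ≤ τ) (n : ℕ) :
    Var[fun ω => (L.ε n ω).2; P] = 2 * k * γ ^ 2 * τ * phi (2 * γ * τ) := by
  have hC : 0 ≤ 2 * k * γ ^ 2 * τ * phi (2 * γ * τ) := mul_nonneg (by positivity) (phi_nonneg _)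
  simpa using L.variance_noise n 0 1 (by simpa using hC)

lemma indepFun_U0_noise (m : ℕ) {g : ℝ × ℝ → ℝ} (hg : Measurable g) :
    IndepFun L.U0 (fun ω => g (L.ε m ω)) P :=
  L.indep_U0.comp measurable_id (hg.comp (measurable_pi_apply m))

lemma indepFun_noise {n m : ℕ} (hnm : n ≠ m) {f g : ℝ × ℝ → ℝ} (hf : Measurable f)
    (hg : Measurable g) : IndepFun (fun ω => f (L.ε n ω)) (fun ω => g (L.ε m ω)) P :=
  (L.indep_ε.indepFun hnm).comp hf hg

lemma U_succ (n : ℕ) :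
    L.U (n + 1) = Real.exp (-(γ * τ)) • L.U n + fun ω => (L.ε n ω).2 := rfl

lemma ΔX_eq (n : ℕ) : L.ΔX n = (τ * phi (γ * τ)) • L.U n + fun ω => (L.ε n ω).1 := rfl

lemma memLp_U (n : ℕ) : MemLp (L.U n) 2 P := by
  induction n with
  | zero => exact (HasLaw.hasGaussianLaw ⟨L.meas_U0.aemeasurable, L.law_U0⟩).memLp_two
  | succ n ih => exact (ih.const_smul (Real.exp (-(γ * τ)))).add (L.memLp_noise_snd n)

lemma memLp_ΔX (n : ℕ) : MemLp (L.ΔX n) 2 P :=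
  ((L.memLp_U n).const_smul (τ * phi (γ * τ))).add (L.memLp_noise_fst n)

variable [IsFiniteMeasure P]

lemma covariance_noise_fst_snd (hγ : 0 < γ) (hk : 0 ≤ k) (hτ : 0 < τ) (n : ℕ) :
    cov[fun ω => (L.ε n ω).1, fun ω => (L.ε n ω).2; P] = k * (γ * τ * phi (γ * τ)) ^ 2 := by
  have hsum := L.variance_noise n 1 1 (by
    simp only [one_pow, one_mul, mul_one]
    rw [← L.variance_noise_fst hγ hk hτ n, ← L.variance_noise_snd hk hτ.le n]
    exact add_nonneg (add_nonneg (variance_nonneg _ _) (by positivity)) (variance_nonneg _ _))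
  rw [show (fun ω => 1 * (L.ε n ω).1 + 1 * (L.ε n ω).2)
      = (fun ω => (L.ε n ω).1) + fun ω => (L.ε n ω).2 by ext; simp,
    variance_add (L.memLp_noise_fst n) (L.memLp_noise_snd n),
    L.variance_noise_fst hγ hk hτ n, L.variance_noise_snd hk hτ.le n] at hsum
  linarith

lemma covariance_U_noise_eq_zero {n m : ℕ} (hnm : n ≤ m) {g : ℝ × ℝ → ℝ} (hg : Measurable g)
    (hZ : MemLp (fun ω => g (L.ε m ω)) 2 P) : cov[L.U n, fun ω => g (L.ε m ω); P] = 0 := by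
  induction n with
  | zero => exact (L.indepFun_U0_noise m hg).covariance_eq_zero (L.memLp_U 0) hZ
  | succ n ih =>
    rw [U_succ, covariance_add_left ((L.memLp_U n).const_smul _) (L.memLp_noise_snd n) hZ,
      covariance_smul_left, ih (by omega),
      (L.indepFun_noise (by omega) measurable_snd hg).covariance_eq_zero (L.memLp_noise_snd n) hZ,
      mul_zero, add_zero]

lemma variance_U (hγ : 0 < γ) (hk : 0 < k) (hτ : 0 < τ) (n : ℕ) : Var[L.U n; P] = k * γ := by
  induction n with
  | zero =>
    change Var[L.U0; P] = k * γ
    rw [(HasLaw.mk L.meas_U0.aemeasurable L.law_U0).variance_eq, variance_id_gaussianReal,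
      Real.coe_toNNReal _ (by positivity)]
  | succ n ih =>
    have hU := L.memLp_U n
    have hε := L.memLp_noise_snd n
    have hUε := L.covariance_U_noise_eq_zero le_rfl measurable_snd hε
    have hstat := exp_neg_sq_add_two_mul_mul_phi_two_mul (γ * τ)
    rw [← mul_assoc] at hstat
    rw [← covariance_self (L.memLp_U _).aemeasurable, U_succ,
      covariance_smul_add_smul_add hU hε hU hε, covariance_self hU.aemeasurable,
      covariance_self hε.aemeasurable, covariance_comm (fun ω => (L.ε n ω).2), hUε, ih,
      L.variance_noise_snd hk.le hτ.le]
    linear_combination (k * γ) * hstat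

lemma covariance_ΔX_noise_eq_zero {n m : ℕ} (hnm : n < m) {g : ℝ × ℝ → ℝ} (hg : Measurable g)
    (hZ : MemLp (fun ω => g (L.ε m ω)) 2 P) : cov[L.ΔX n, fun ω => g (L.ε m ω); P] = 0 := by
  rw [ΔX_eq, covariance_add_left ((L.memLp_U n).const_smul _) (L.memLp_noise_fst n) hZ,
    covariance_smul_left, L.covariance_U_noise_eq_zero hnm.le hg hZ,
    (L.indepFun_noise hnm.ne measurable_fst hg).covariance_eq_zero (L.memLp_noise_fst n) hZ,
    mul_zero, add_zero]

lemma variance_ΔX (hγ : 0 < γ) (hk : 0 < k) (hτ : 0 < τ) (n : ℕ) :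
    Var[L.ΔX n; P] = 2 * k * τ * (1 - phi (γ * τ)) := by
  have hU := L.memLp_U n
  have hε := L.memLp_noise_fst n
  have hUε := L.covariance_U_noise_eq_zero le_rfl measurable_fst hε
  have hφ := mul_phi_sq_add_two_mul_phi_two_mul (γ * τ)
  rw [← mul_assoc] at hφ
  rw [← covariance_self (L.memLp_ΔX n).aemeasurable, ΔX_eq,
    covariance_smul_add_smul_add hU hε hU hε, covariance_self hU.aemeasurable,
    covariance_self hε.aemeasurable, covariance_comm (fun ω => (L.ε n ω).1), hUε,
    L.variance_U hγ hk hτ, L.variance_noise_fst hγ hk.le hτ]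
  linear_combination (k * τ) * hφ

lemma covariance_ΔX_U (hγ : 0 < γ) (hk : 0 < k) (hτ : 0 < τ) (n j : ℕ) :
    cov[L.ΔX n, L.U (n + j + 1); P]
      = k * γ * τ * phi (γ * τ) * Real.exp (-(γ * τ)) ^ j := by
  induction j with
  | zero =>
    have hU := L.memLp_U n
    have hε₁ := L.memLp_noise_fst n
    have hε₂ := L.memLp_noise_snd n
    rw [ΔX_eq, add_zero, U_succ, covariance_smul_add_smul_add hU hε₁ hU hε₂,
      L.covariance_U_noise_eq_zero le_rfl measurable_snd hε₂,
      covariance_comm (fun ω => (L.ε n ω).1),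
      L.covariance_U_noise_eq_zero le_rfl measurable_fst hε₁,
      covariance_self hU.aemeasurable, L.variance_U hγ hk hτ,
      L.covariance_noise_fst_snd hγ hk.le hτ]
    linear_combination (k * γ * τ * phi (γ * τ)) * mul_phi (γ * τ)
  | succ j ih =>
    have hε := L.memLp_noise_snd (n + j + 1)
    rw [← add_assoc, U_succ, covariance_add_right (L.memLp_ΔX n)
        ((L.memLp_U _).const_smul _) hε, covariance_smul_right, ih,
      L.covariance_ΔX_noise_eq_zero (by omega) measurable_snd hε]
    ring

lemma covariance_ΔX_ΔX (hγ : 0 < γ) (hk : 0 < k) (hτ : 0 < τ) (n j : ℕ) :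
    cov[L.ΔX n, L.ΔX (n + j + 1); P]
      = k * γ * τ ^ 2 * phi (γ * τ) ^ 2 * Real.exp (-(γ * τ)) ^ j := by
  have hε := L.memLp_noise_fst (n + j + 1)
  rw [ΔX_eq (n := n + j + 1), covariance_add_right (L.memLp_ΔX n)
      ((L.memLp_U _).const_smul _) hε, covariance_smul_right, L.covariance_ΔX_U hγ hk hτ,
    L.covariance_ΔX_noise_eq_zero (by omega) measurable_fst hε]
  ring

end DiscreteLangevin

/-- Toeplitz autocovariance of discretised Langevin displacements:
`Cov(ΔX_n, ΔX_{n+m}) = 2kτ(1 - φ(γτ))` for `m = 0` and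
`Cov(ΔX_n, ΔX_{n+m}) = kγτ²φ(γτ)²e^{-(m-1)γτ}` for `m ≥ 1`. -/
theorem langevin_displacement_autocovariance {Ω : Type*} [MeasurableSpace Ω]
    (P : Measure Ω) [IsProbabilityMeasure P]
    (γ k τ : ℝ) (hγ : 0 < γ) (hk : 0 < k) (hτ : 0 < τ)
    (L : DiscreteLangevin P γ k τ) :
    (∀ n : ℕ, cov P (L.ΔX n) (L.ΔX n) = 2 * k * τ * (1 - phi (γ * τ)))
    ∧ ∀ n m : ℕ, 1 ≤ m →
        cov P (L.ΔX n) (L.ΔX (n + m))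
          = k * γ * τ ^ 2 * phi (γ * τ) ^ 2 * Real.exp (-(((m : ℝ) - 1) * γ * τ)) := by
  refine ⟨fun n => ?_, fun n m hm => ?_⟩
  · rw [cov_eq_covariance, covariance_self (L.memLp_ΔX n).aemeasurable,
      L.variance_ΔX hγ hk hτ n]
  · obtain ⟨j, rfl⟩ := Nat.exists_eq_add_of_le' hm
    have hexp : Real.exp (-((((j + 1 : ℕ) : ℝ) - 1) * γ * τ)) = Real.exp (-(γ * τ)) ^ j := by
      rw [← Real.exp_nat_mul]
      push_cast
      ring_nf
    rw [hexp, cov_eq_covariance, ← add_assoc, L.covariance_ΔX_ΔX hγ hk hτ n j]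
end
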